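/- arXiv:2110.13672 — 3 statements merged into one kernel-verified Lean document; each statement's English description precedes it below -/
import Mathlib

section
/- Let t₀ < t₁ be real numbers, let m : [t₀, t₁] → (0, ∞) be continuous, and let c : [t₀, t₁) → ℝ be differentiable with c'(t)² ≤ (1 + c(t)²)/m(t) for all t. Then c is bounded on [t₀, t₁). -/
/-!
Since `m` is continuous and positive on the compact interval `[t₀, t₁]`, `1 / m ≤ C` there, so
`|c'| ≤ √(C (1 + c²)) ≤ √C (1 + |c|)`. A derivative of at most linear growth in `|c|` makes `|c|`
grow at most exponentially (Grönwall), which is bounded on the finite interval.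
-/

open Real Set

theorem norm_le_gronwallBound_of_hasDerivAt_Ico {E : Type*} [NormedAddCommGroup E]
    [NormedSpace ℝ E] {f f' : ℝ → E} {K ε a b : ℝ} (hK : 0 ≤ K) (hε : 0 ≤ ε)
    (hf : ∀ x ∈ Ico a b, HasDerivAt f (f' x) x)
    (bound : ∀ x ∈ Ico a b, ‖f' x‖ ≤ K * ‖f x‖ + ε) :
    ∀ x ∈ Ico a b, ‖f x‖ ≤ gronwallBound ‖f a‖ K ε (b - a) := by
  intro x hx
  have hsub : Icc a x ⊆ Ico a b := Icc_subset_Ico_right hx.2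
  have hcont : ContinuousOn f (Icc a x) := fun y hy =>
    (hf y (hsub hy)).continuousAt.continuousWithinAt
  calc ‖f x‖ ≤ gronwallBound ‖f a‖ K ε (x - a) :=
        norm_le_gronwallBound_of_norm_deriv_right_le hcont
          (fun y hy => (hf y (hsub (Ico_subset_Icc_self hy))).hasDerivWithinAt) le_rfl
          (fun y hy => bound y (hsub (Ico_subset_Icc_self hy))) x ⟨hx.1, le_rfl⟩
    _ ≤ gronwallBound ‖f a‖ K ε (b - a) :=
        gronwallBound_mono (norm_nonneg _) hε hK (by linarith [hx.2])

theorem abs_le_sqrt_mul_abs_add_sqrt_of_sq_le {x y M : ℝ} (h : x ^ 2 ≤ M * (1 + y ^ 2)) :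
    |x| ≤ √M * |y| + √M := by
  have hy : √(1 + y ^ 2) ≤ 1 + |y| :=
    sqrt_le_iff.2 ⟨by positivity, by nlinarith [abs_nonneg y, sq_abs y]⟩
  calc |x| = √(x ^ 2) := (sqrt_sq_eq_abs x).symm
    _ ≤ √(M * (1 + y ^ 2)) := sqrt_le_sqrt h
    _ = √M * √(1 + y ^ 2) := sqrt_mul' M (by positivity)
    _ ≤ √M * (1 + |y|) := by gcongr
    _ = √M * |y| + √M := by ring

theorem causal_curve_bounded_general (t₀ t₁ : ℝ)
    (m : ℝ → ℝ) (hm : ContinuousOn m (Icc t₀ t₁)) (hmpos : ∀ t ∈ Icc t₀ t₁, 0 < m t)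
    (c c' : ℝ → ℝ)
    (hderiv : ∀ t ∈ Ico t₀ t₁, HasDerivAt c (c' t) t)
    (hbound : ∀ t ∈ Ico t₀ t₁, (c' t) ^ 2 ≤ (1 + (c t) ^ 2) / m t) :
    ∃ B : ℝ, ∀ t ∈ Ico t₀ t₁, |c t| ≤ B := by
  obtain ⟨C, hC⟩ := isCompact_Icc.exists_bound_of_continuousOn
    (hm.inv₀ fun t ht => (hmpos t ht).ne')
  have hc' : ∀ t ∈ Ico t₀ t₁, ‖c' t‖ ≤ √C * ‖c t‖ + √C := by
    intro t ht
    refine abs_le_sqrt_mul_abs_add_sqrt_of_sq_le ?_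
    calc (c' t) ^ 2 ≤ (1 + (c t) ^ 2) / m t := hbound t ht
      _ = (m t)⁻¹ * (1 + (c t) ^ 2) := div_eq_inv_mul _ _
      _ ≤ C * (1 + (c t) ^ 2) := by
        gcongr
        exact (le_abs_self _).trans (hC t (Ico_subset_Icc_self ht))
  exact ⟨_, norm_le_gronwallBound_of_hasDerivAt_Ico (sqrt_nonneg C) (sqrt_nonneg C) hderiv hc'⟩

/-- A curve `c` on `[t₀, t₁)` with `c'(t)² ≤ (1 + c(t)²)/m(t)`, where `m` is
continuous and positive on `[t₀, t₁]`, remains bounded on `[t₀, t₁)`. -/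
theorem causal_curve_bounded (t₀ t₁ : ℝ) (ht : t₀ < t₁)
    (m : ℝ → ℝ) (hm : ContinuousOn m (Icc t₀ t₁)) (hmpos : ∀ t ∈ Icc t₀ t₁, 0 < m t)
    (c c' : ℝ → ℝ)
    (hderiv : ∀ t ∈ Ico t₀ t₁, HasDerivAt c (c' t) t)
    (hbound : ∀ t ∈ Ico t₀ t₁, (c' t) ^ 2 ≤ (1 + (c t) ^ 2) / m t) :
    ∃ B : ℝ, ∀ t ∈ Ico t₀ t₁, |c t| ≤ B :=
  causal_curve_bounded_general t₀ t₁ m hm hmpos c c' hderiv hbound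
end

section
/- Let α > 1 and let (t₀, x₀) satisfy x₀ > -log(α - 1), x₀ > 0, and |1 + t₀x₀| < e^{-x₀}. Define F(x) = (α - 1)(x - x₀) - x₀e^{-x} + (1 + t₀x₀)x. Then F(x₀) < 0, F is strictly increasing on [x₀, ∞), F(x) → ∞ as x → ∞, and there exists a unique x > x₀ with F(x) = 0. -/
open Real Set

/-- Properties of `F(x) = (α-1)(x-x₀) - x₀ e^{-x} + (1+t₀x₀)x` giving the unique
intersection of the rightgoing lightlike geodesic of `g^α` from `(t₀,x₀)` with `γ₊`. -/
theorem rightgoing_intersection (α t₀ x₀ : ℝ) (hα : 1 < α)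
    (hx₀log : -Real.log (α - 1) < x₀) (hx₀pos : 0 < x₀)
    (hU : |1 + t₀ * x₀| < Real.exp (-x₀)) :
    (fun x : ℝ => (α - 1) * (x - x₀) - x₀ * Real.exp (-x) + (1 + t₀ * x₀) * x) x₀ < 0 ∧
    StrictMonoOn (fun x : ℝ => (α - 1) * (x - x₀) - x₀ * Real.exp (-x) + (1 + t₀ * x₀) * x)
      (Ici x₀) ∧
    Filter.Tendsto (fun x : ℝ => (α - 1) * (x - x₀) - x₀ * Real.exp (-x) + (1 + t₀ * x₀) * x)
      Filter.atTop Filter.atTop ∧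
    ∃! x : ℝ, x₀ < x ∧
      (α - 1) * (x - x₀) - x₀ * Real.exp (-x) + (1 + t₀ * x₀) * x = 0 := by
  set F := fun x : ℝ => (α - 1) * (x - x₀) - x₀ * Real.exp (-x) + (1 + t₀ * x₀) * x with hFdef
  have hα1 : (0:ℝ) < α - 1 := by linarith
  have hexp : Real.exp (-x₀) < α - 1 := by
    have := Real.exp_lt_exp.mpr (show -x₀ < Real.log (α - 1) by linarith)
    rwa [Real.exp_log hα1] at this
  have habs := abs_lt.mp hU
  have hcpos : (0:ℝ) < (α - 1) + (1 + t₀ * x₀) := by linarith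
  have hmono : StrictMono F := by
    intro a b hab
    have h := Real.exp_lt_exp.mpr (neg_lt_neg hab)
    have h2 := mul_lt_mul_of_pos_left h hx₀pos
    simp only [hFdef]
    nlinarith [sub_pos.mpr hab]
  have hcont : Continuous F := by fun_prop
  have hF0 : F x₀ < 0 := by
    simp only [hFdef]
    nlinarith [Real.exp_pos (-x₀)]
  have htend : Filter.Tendsto F Filter.atTop Filter.atTop := by
    have hle : (fun x => ((α - 1) + (1 + t₀ * x₀)) * x - ((α - 1) * x₀ + x₀)) ≤ᶠ[Filter.atTop] F := by
      filter_upwards [Filter.eventually_ge_atTop (0:ℝ)] with x hx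
      have h1 : Real.exp (-x) ≤ 1 := Real.exp_le_one_iff.mpr (by linarith)
      have h2 := mul_le_mul_of_nonneg_left h1 hx₀pos.le
      simp only [hFdef]
      nlinarith
    exact Filter.tendsto_atTop_mono' Filter.atTop hle
      (Filter.tendsto_atTop_add_const_right _ _
        (Filter.Tendsto.const_mul_atTop hcpos Filter.tendsto_id))
  refine ⟨hF0, hmono.strictMonoOn _, htend, ?_⟩
  obtain ⟨b, hbpos, hbgt⟩ :=
    ((htend.eventually_gt_atTop 0).and (Filter.eventually_gt_atTop x₀)).exists
  obtain ⟨x, hx, hxF⟩ := intermediate_value_Ioo hbgt.le hcont.continuousOn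
    (show (0:ℝ) ∈ Ioo (F x₀) (F b) from ⟨hF0, hbpos⟩)
  refine ⟨x, ⟨hx.1, hxF⟩, ?_⟩
  rintro y ⟨hy1, hy2⟩
  exact hmono.injective (hy2.trans hxF.symm)
end

section
/- Let α > 1 and let (t₀, x₀) satisfy x₀ > 1 + 2/α and |1 + t₀x₀| < e^{-x₀}. Define G(x) = -(α + 1)(x - x₀) - x₀e^{-x} + (1 + t₀x₀)x. Then G(1) > 0, G(x₀) < 0, G is strictly concave (G''(x) = -x₀e^{-x} < 0), and there exists a unique x ∈ (1, x₀) with G(x) = 0. -/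
/-!
With `c = 1 + t₀x₀`, `|c| < e^{-x₀}`, the affine part dominates at `x = 1`: `α(x₀ - 1) > 2` gives
`G(1) > x₀ + 1 - x₀/e - e^{-x₀} > 0`, while `G(x₀) = x₀(c - e^{-x₀}) < 0`. Since
`G'' = -x₀e^{-x} < 0`, `G` is strictly concave, so it cannot vanish twice to the right of a
point where it is positive; the intermediate value theorem supplies the zero.
-/

open Real Set

theorem StrictConcaveOn.existsUnique_zero_Ioo {f : ℝ → ℝ} {a b : ℝ} (hab : a < b)
    (hf : StrictConcaveOn ℝ (Icc a b) f) (hcont : ContinuousOn f (Icc a b))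
    (ha : 0 < f a) (hb : f b < 0) : ∃! x, x ∈ Ioo a b ∧ f x = 0 := by
  obtain ⟨c, hc, hfc⟩ := intermediate_value_Ioo' hab.le hcont ⟨hb, ha⟩
  refine ⟨c, ⟨hc, hfc⟩, ?_⟩
  -- for zeros `c < d`, strict concavity on `[a, d]` gives `0 = f c > min (f a) (f d) = 0`
  have no_zero_between : ∀ {c d}, c ∈ Ioo a b → d ∈ Ioo a b → f c = 0 → f d = 0 → ¬ c < d := by
    intro c d hc hd hfc hfd hcd
    have := hf.lt_on_openSegment (left_mem_Icc.2 hab.le) (Ioo_subset_Icc_self hd)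
      (hc.1.trans hcd).ne (Ioo_subset_openSegment ⟨hc.1, hcd⟩)
    rw [hfc, hfd, min_eq_right ha.le] at this
    exact this.false
  rintro d ⟨hd, hfd⟩
  rcases lt_trichotomy d c with h | h | h
  · exact (no_zero_between hd hc hfd hfc h).elim
  · exact h
  · exact (no_zero_between hc hd hfc hfd h).elim

section ExpNeg

variable (a x₁ k c : ℝ)

theorem hasDerivAt_affine_sub_mul_exp_neg (x : ℝ) :
    HasDerivAt (fun x : ℝ => a * (x - x₁) - k * exp (-x) + c * x) (a + k * exp (-x) + c) x := by
  have hexp := ((hasDerivAt_neg' x).exp).const_mul k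
  have hlin := ((hasDerivAt_id' x).sub_const x₁).const_mul a
  exact ((hlin.sub hexp).add ((hasDerivAt_id' x).const_mul c)).congr_deriv (by ring)

theorem deriv_deriv_affine_sub_mul_exp_neg (x : ℝ) :
    deriv (deriv fun x : ℝ => a * (x - x₁) - k * exp (-x) + c * x) x = -k * exp (-x) := by
  have hderiv : deriv (fun x : ℝ => a * (x - x₁) - k * exp (-x) + c * x) =
      fun x => a + k * exp (-x) + c :=
    funext fun x => (hasDerivAt_affine_sub_mul_exp_neg a x₁ k c x).deriv
  rw [hderiv]
  exact ((((((hasDerivAt_neg' x).exp).const_mul k).const_add a).add_const c).congr_deriv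
    (by ring)).deriv

theorem strictConcaveOn_affine_sub_mul_exp_neg {k : ℝ} (hk : 0 < k) :
    StrictConcaveOn ℝ univ (fun x : ℝ => a * (x - x₁) - k * exp (-x) + c * x) :=
  strictConcaveOn_univ_of_deriv2_neg (by fun_prop) fun x => by
    rw [Function.iterate_succ_apply, Function.iterate_one,
      deriv_deriv_affine_sub_mul_exp_neg]
    nlinarith [exp_pos (-x)]

end ExpNeg

/-- Properties of `G(x) = -(α+1)(x-x₀) - x₀ e^{-x} + (1+t₀x₀)x` giving the unique
intersection of the leftgoing lightlike geodesic of `g^α` from `(t₀,x₀)` with `γ₊`. -/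
theorem leftgoing_intersection (α t₀ x₀ : ℝ) (hα : 1 < α)
    (hx₀ : 1 + 2 / α < x₀)
    (hU : |1 + t₀ * x₀| < Real.exp (-x₀)) :
    (fun x : ℝ => -(α + 1) * (x - x₀) - x₀ * Real.exp (-x) + (1 + t₀ * x₀) * x) 1 > 0 ∧
    (fun x : ℝ => -(α + 1) * (x - x₀) - x₀ * Real.exp (-x) + (1 + t₀ * x₀) * x) x₀ < 0 ∧
    StrictConcaveOn ℝ univ
      (fun x : ℝ => -(α + 1) * (x - x₀) - x₀ * Real.exp (-x) + (1 + t₀ * x₀) * x) ∧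
    (∀ x : ℝ, deriv (deriv
      (fun x : ℝ => -(α + 1) * (x - x₀) - x₀ * Real.exp (-x) + (1 + t₀ * x₀) * x)) x
        = -x₀ * Real.exp (-x)) ∧
    ∃! x : ℝ, x ∈ Ioo (1 : ℝ) x₀ ∧
      -(α + 1) * (x - x₀) - x₀ * Real.exp (-x) + (1 + t₀ * x₀) * x = 0 := by
  have hα₀ : 0 < α := by linarith
  have hscaled : 2 < α * (x₀ - 1) := (div_lt_iff₀' hα₀).1 (by linarith)
  have hx₀_pos : 0 < x₀ := by nlinarith
  obtain ⟨hc_lo, hc_hi⟩ := abs_lt.mp hU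
  have hexp_one : x₀ * exp (-1) < x₀ :=
    mul_lt_of_lt_one_right hx₀_pos (exp_lt_one_iff.2 (by norm_num))
  have hexp_x₀ : exp (-x₀) < 1 := exp_lt_one_iff.2 (by linarith)
  have hG_one : -(α + 1) * (1 - x₀) - x₀ * exp (-1) + (1 + t₀ * x₀) * 1 > 0 := by
    linarith
  have hG_x₀ : -(α + 1) * (x₀ - x₀) - x₀ * exp (-x₀) + (1 + t₀ * x₀) * x₀ < 0 := by
    nlinarith
  have hconc := strictConcaveOn_affine_sub_mul_exp_neg (-(α + 1)) x₀ (1 + t₀ * x₀) hx₀_pos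
  refine ⟨hG_one, hG_x₀, hconc, deriv_deriv_affine_sub_mul_exp_neg _ _ _ _, ?_⟩
  exact (hconc.subset (subset_univ _) (convex_Icc _ _)).existsUnique_zero_Ioo (by nlinarith)
    (by fun_prop) hG_one hG_x₀
end
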